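/- arXiv:1010.5020 — 4 statements merged into one kernel-verified Lean document; each statement's English description precedes it below -/
import Mathlib

section
/- Let R be a commutative ring with involution, h ∈ R a nonzero element that is squarefree and fixed by the involution (h̄ = h·unit), and let M = R/(h) with a sesquilinear form Bl(x,y) = x·ȳ·r/h valued in Frac(R)/R, where r is coprime to h. If s ∈ R satisfies h | s·s̄·r, then h | s. Consequently M has no nonzero isotropic elements. -/
/-!
Coprimality with `r` reduces `h ∣ s s̄ r` to `h ∣ s s̄`. A prime `p ∣ h` then divides `s` or `s̄`,
and in the second case `p ~ p̄ ∣ s`. As `h` is squarefree, it divides every element that all of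
its prime factors divide.
-/

theorem Squarefree.dvd_of_forall_prime_dvd {α : Type*} [CommMonoidWithZero α]
    [UniqueFactorizationMonoid α] {a b : α} (ha : Squarefree a)
    (hb : ∀ p, Prime p → p ∣ a → p ∣ b) : a ∣ b := by
  nontriviality α
  induction a using UniqueFactorizationMonoid.induction_on_prime generalizing b with
  | h₁ => exact absurd ha not_squarefree_zero
  | h₂ u hu => exact hu.dvd
  | h₃ a p _ hp ih =>
    obtain ⟨t, rfl⟩ := hb p hp (dvd_mul_right p a)
    have hapt : a ∣ p * t :=
      ih ha.of_mul_right fun q hq hqa => hb q hq (dvd_mul_of_dvd_right hqa p)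
    exact mul_dvd_mul_left p ((IsRelPrime.of_squarefree_mul ha).symm.dvd_of_dvd_mul_left hapt)

theorem Prime.dvd_of_dvd_mul_star_self {α : Type*} [CommMonoidWithZero α] [StarMul α]
    {p s : α} (hp : Prime p) (hsym : Associated (star p) p) (h : p ∣ s * star s) : p ∣ s := by
  rcases hp.dvd_or_dvd h with hs | hs
  · exact hs
  · simpa using hsym.symm.dvd.trans (map_dvd starMulAut hs)

theorem stmt_6_general (R : Type*) [CommRing R] [IsDomain R] [IsPrincipalIdealRing R]
    [StarRing R] (h r : R) (hsf : Squarefree h)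
    (hfactors : ∀ q : R, Prime q → q ∣ h → Associated (star q) q)
    (hcop : IsCoprime r h) :
    ∀ s : R, h ∣ s * star s * r → h ∣ s := by
  intro s hs
  have hss : h ∣ s * star s := hcop.symm.dvd_of_dvd_mul_right hs
  exact hsf.dvd_of_forall_prime_dvd fun p hp hph =>
    hp.dvd_of_dvd_mul_star_self (hfactors p hp hph) (hph.trans hss)

/-- Let `R` be a PID with involution, `h ∈ R` a nonzero squarefree element
fixed by the involution (up to a unit, and with all prime factors symmetric),
and `r` coprime to `h`.  If `s ∈ R` satisfies `h ∣ s * s̄ * r`, then `h ∣ s`.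
Consequently `R/(h)` with the Blanchfield-type form `Bl(x,y) = x ȳ r / h` has
no nonzero isotropic elements. -/
theorem stmt_6 (R : Type*) [CommRing R] [IsDomain R] [IsPrincipalIdealRing R]
    [StarRing R] (h r : R) (hne : h ≠ 0) (hsf : Squarefree h)
    (hsym : Associated (star h) h)
    (hfactors : ∀ q : R, Prime q → q ∣ h → Associated (star q) q)
    (hcop : IsCoprime r h) :
    ∀ s : R, h ∣ s * star s * r → h ∣ s :=
  stmt_6_general R h r hsf hfactors hcop
end

section
/- Let A = ⊕_{i=1}^n ℚ[t,t⁻¹]/(q_i) with q_i | q_{i+1} and q_1⋯q_n = Δ. If every prime factor of a polynomial p divides Δ with multiplicity at most 1, then A ⊗ R_p is a cyclic R_p-module, isomorphic to R_p/(h) where h = gcd(p, Δ); moreover h is squarefree. -/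
/-!
Let `P = q₁ ⋯ qₙ₋₁`, so that `Δ = P qₙ`. A prime dividing `p` and some `qᵢ` with `i < n` also
divides `qᵢ₊₁`, so its square divides `Δ`; hence `P` is coprime to `p`, and so to `h`, which
forces `h ∣ qₙ`, say `qₙ = h h'`. A prime dividing `h'` and `p` divides `Δ`, hence `h`, and its
square divides `h h' ∣ Δ`; so `h'` is coprime to `p` too. The surjection `A → R/(qₙ) → R/(h)`
therefore has kernel annihilated by `P h'`, a unit of `R_p`, and becomes an isomorphism after
localizing. Squarefreeness of `h` is the same multiplicity argument applied to `h ∣ gcd(p, Δ)`.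
-/

open scoped DirectSum
open LaurentPolynomial

theorem IsLocalization.isPrincipalIdealRing {R : Type*} [CommRing R] [IsPrincipalIdealRing R]
    (M : Submonoid R) (S : Type*) [CommRing S] [Algebra R S] [IsLocalization M S] :
    IsPrincipalIdealRing S where
  principal J := by
    obtain ⟨g, hg⟩ := IsPrincipalIdealRing.principal (J.under R)
    refine ⟨algebraMap R S g, ?_⟩
    rw [← IsLocalization.map_under M S J, hg, Ideal.submodule_span_eq, Ideal.map_span,
      Set.image_singleton]

namespace LaurentPolynomial

instance {R : Type*} [CommRing R] [IsDomain R] : IsDomain R[T;T⁻¹] :=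
  NoZeroDivisors.to_isDomain _

instance {K : Type*} [Field K] : IsPrincipalIdealRing K[T;T⁻¹] :=
  IsLocalization.isPrincipalIdealRing (Submonoid.powers (Polynomial.X : Polynomial K)) _

theorem exists_prime (K : Type*) [Field K] : ∃ f : K[T;T⁻¹], Prime f := by
  have hunit : ¬ IsUnit (T 1 - 1 : K[T;T⁻¹]) := fun hu => by
    simpa using hu.map (eval₂ (RingHom.id K) 1)
  have hne : (T 1 - 1 : K[T;T⁻¹]) ≠ 0 := by
    rw [← Polynomial.toLaurent_X, ← map_one Polynomial.toLaurent, ← map_sub,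
      Polynomial.toLaurent_ne_zero]
    exact Polynomial.X_sub_C_ne_zero 1
  obtain ⟨f, hf, -⟩ := WfDvdMonoid.exists_irreducible_factor hunit hne
  exact ⟨f, hf.prime⟩

end LaurentPolynomial

section Localization

variable {R M N : Type*} [CommRing R] [AddCommGroup M] [Module R M] [AddCommGroup N] [Module R N]
  {S : Submonoid R} {g : M →ₗ[R] N} {s : R}

theorem IsLocalizedModule.map_bijective_of_surjective_of_smul_ker {M' N' : Type*}
    [AddCommGroup M'] [Module R M'] [AddCommGroup N'] [Module R N']
    (f : M →ₗ[R] M') (f' : N →ₗ[R] N') [IsLocalizedModule S f] [IsLocalizedModule S f']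
    (hg : Function.Surjective g) (hs : s ∈ S) (hker : ∀ m, g m = 0 → s • m = 0) :
    Function.Bijective (map S f f' g) := by
  refine ⟨(injective_iff_map_eq_zero _).mpr fun x hx => ?_, map_surjective S f f' g hg⟩
  obtain ⟨⟨m, t⟩, rfl⟩ := mk'_surjective S f x
  rw [Function.uncurry_apply_pair, map_mk', mk'_eq_zero'] at hx
  rw [Function.uncurry_apply_pair, mk'_eq_zero']
  obtain ⟨u, hu⟩ := hx
  refine ⟨⟨s, hs⟩ * u, ?_⟩
  rw [mul_smul]
  exact hker _ (by rwa [LinearMap.map_smul_of_tower])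

theorem LocalizedModule.nonempty_linearEquiv_of_surjective_of_smul_ker
    (hg : Function.Surjective g) (hs : s ∈ S) (hker : ∀ m, g m = 0 → s • m = 0) :
    Nonempty (LocalizedModule S M ≃ₗ[R] LocalizedModule S N) :=
  ⟨.ofBijective _ (IsLocalizedModule.map_bijective_of_surjective_of_smul_ker
    (mkLinearMap S M) (mkLinearMap S N) hg hs hker)⟩

end Localization

section QuotientComponent

variable {R ι : Type*} [CommRing R] [DecidableEq ι] (q : ι → R) (j : ι) {h : R} (hj : h ∣ q j)

noncomputable def quotientComponent : (⨁ i, R ⧸ Ideal.span {q i}) →ₗ[R] R ⧸ Ideal.span {h} :=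
  Submodule.factor (Ideal.span_singleton_le_span_singleton.mpr hj) ∘ₗ
    DirectSum.component R ι (fun i => R ⧸ Ideal.span {q i}) j

theorem quotientComponent_surjective : Function.Surjective (quotientComponent q j hj) := by
  rw [quotientComponent, LinearMap.coe_comp]
  refine (Submodule.factor_surjective _).comp fun x => ⟨DirectSum.lof R ι _ j x, ?_⟩
  exact DirectSum.component.lof_self (M := fun i => R ⧸ Ideal.span {q i}) R j x

theorem smul_eq_zero_of_quotientComponent_eq_zero {c : R} (hc : ∀ i ≠ j, q i ∣ c)
    (hcj : q j ∣ h * c) {m : ⨁ i, R ⧸ Ideal.span {q i}} (hm : quotientComponent q j hj m = 0) :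
    c • m = 0 := by
  ext i
  obtain ⟨a, ha⟩ := Submodule.Quotient.mk_surjective _ (m i)
  rw [DirectSum.smul_apply, ← ha, ← Submodule.Quotient.mk_smul, DirectSum.zero_apply,
    Submodule.Quotient.mk_eq_zero, Ideal.mem_span_singleton, smul_eq_mul]
  by_cases hi : i = j
  · subst hi
    rw [quotientComponent, LinearMap.comp_apply, ← DirectSum.apply_eq_component, ← ha,
      ← Submodule.mkQ_apply, Submodule.factor_mk, Submodule.mkQ_apply,
      Submodule.Quotient.mk_eq_zero, Ideal.mem_span_singleton] at hm
    exact hcj.trans (mul_comm h c ▸ mul_dvd_mul_left c hm)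
  · exact (hc i hi).mul_right a

end QuotientComponent

section PrincipalIdealRing

variable {R : Type*} [CommRing R] [IsDomain R] [IsPrincipalIdealRing R] {p Δ h : R}

theorem isCoprime_of_mul_dvd_of_not_sq_dvd (hpΔ : p ≠ 0 ∨ Δ ≠ 0)
    (hmult : ∀ f : R, Prime f → f ∣ p → ¬ f ^ 2 ∣ Δ) {x y : R} (hxy : x * y ∣ Δ)
    (hy : ∀ f : R, Prime f → f ∣ x → f ∣ p → f ∣ y) : IsCoprime x p := by
  refine isCoprime_of_prime_dvd (fun ⟨hx, hp⟩ => ?_) fun f hf hfx hfp => ?_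
  · exact hpΔ.resolve_left (not_not.mpr hp) (zero_dvd_iff.mp (by simpa [hx] using hxy))
  · exact hmult f hf hfp (sq f ▸ (mul_dvd_mul hfx (hy f hf hfx hfp)).trans hxy)

theorem squarefree_of_dvd_of_not_sq_dvd (hpΔ : p ≠ 0 ∨ Δ ≠ 0)
    (hmult : ∀ f : R, Prime f → f ∣ p → ¬ f ^ 2 ∣ Δ) (hp : h ∣ p) (hΔ : h ∣ Δ) :
    Squarefree h := by
  have h0 : h ≠ 0 := by
    rintro rfl
    exact hpΔ.elim (· (zero_dvd_iff.mp hp)) (· (zero_dvd_iff.mp hΔ))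
  rw [squarefree_iff_irreducible_sq_not_dvd_of_ne_zero h0]
  exact fun f hf hff =>
    hmult f hf.prime (((dvd_mul_right f f).trans hff).trans hp) (sq f ▸ hff.trans hΔ)

variable {m : ℕ} {q : Fin (m + 1) → R}

theorem isCoprime_castSucc_of_dvd_succ (hq : ∀ k : Fin m, q k.castSucc ∣ q k.succ)
    (hprod : ∏ i, q i = Δ) (hpΔ : p ≠ 0 ∨ Δ ≠ 0)
    (hmult : ∀ f : R, Prime f → f ∣ p → ¬ f ^ 2 ∣ Δ) (k : Fin m) : IsCoprime (q k.castSucc) p := by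
  have hpair : q k.castSucc * q k.succ ∣ Δ := by
    rw [← Finset.prod_pair Fin.castSucc_lt_succ.ne, ← hprod]
    exact Finset.prod_dvd_prod_of_subset _ _ _ (Finset.subset_univ _)
  exact isCoprime_of_mul_dvd_of_not_sq_dvd hpΔ hmult hpair fun f _ hfx _ => hfx.trans (hq k)

theorem nonempty_localizedModule_directSum_equiv_quotient
    (hq : ∀ k : Fin m, q k.castSucc ∣ q k.succ) (hprod : ∏ i, q i = Δ) (hpΔ : p ≠ 0 ∨ Δ ≠ 0)
    (hmult : ∀ f : R, Prime f → f ∣ p → ¬ f ^ 2 ∣ Δ) (hp : h ∣ p) (hΔ : h ∣ Δ)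
    (hgcd : ∀ d : R, d ∣ p → d ∣ Δ → d ∣ h) {S : Submonoid R}
    (hS : ∀ g, IsCoprime g p → g ∈ S) :
    Nonempty (LocalizedModule S (⨁ i, R ⧸ Ideal.span {q i}) ≃ₗ[R]
      LocalizedModule S (R ⧸ Ideal.span {h})) := by
  have hcop : IsCoprime (∏ k : Fin m, q k.castSucc) p :=
    IsCoprime.prod_left fun k _ => isCoprime_castSucc_of_dvd_succ hq hprod hpΔ hmult k
  rw [Fin.prod_univ_castSucc] at hprod
  set P := ∏ k : Fin m, q k.castSucc
  obtain ⟨h', hh'⟩ : h ∣ q (Fin.last m) :=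
    (hcop.of_isCoprime_of_dvd_right hp).symm.dvd_of_dvd_mul_left (hprod ▸ hΔ)
  have hh'Δ : h' * h ∣ Δ := ⟨P, by rw [← hprod, hh']; ring⟩
  have hcop' : IsCoprime h' p := isCoprime_of_mul_dvd_of_not_sq_dvd hpΔ hmult hh'Δ
    fun f _ hfh' hfp => hgcd f hfp (hfh'.trans (dvd_of_mul_right_dvd hh'Δ))
  refine LocalizedModule.nonempty_linearEquiv_of_surjective_of_smul_ker
    (quotientComponent_surjective q (Fin.last m) ⟨h', hh'⟩) (s := P * h')
    (hS _ (hcop.mul_left hcop'))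
    fun _ => smul_eq_zero_of_quotientComponent_eq_zero q _ _ (fun i hi => ?_) ?_
  · obtain ⟨k, rfl⟩ := Fin.exists_castSucc_eq.mpr hi
    exact (Finset.dvd_prod_of_mem _ (Finset.mem_univ k)).mul_right h'
  · rw [hh']
    exact mul_dvd_mul_left h (dvd_mul_left h' P)

end PrincipalIdealRing

/-- Let `A = ⊕ᵢ ℚ[t,t⁻¹]/(qᵢ)` with `qᵢ ∣ qᵢ₊₁` and `q₁ ⋯ qₙ = Δ`.  If every
prime factor of `p` divides `Δ` with multiplicity at most `1`, then the
localization of `A` at polynomials coprime to `p` is a cyclic module,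
isomorphic to `R_p/(h)` where `h = gcd(p, Δ)`; moreover `h` is squarefree. -/
theorem stmt_9 (n : ℕ) (q : Fin n → LaurentPolynomial ℚ) (p Δ h : LaurentPolynomial ℚ)
    (hq : ∀ i : Fin n, ∀ hlt : (i : ℕ) + 1 < n, q i ∣ q ⟨(i : ℕ) + 1, hlt⟩)
    (hprod : ∏ i, q i = Δ)
    (hmult : ∀ f : LaurentPolynomial ℚ, Prime f → f ∣ p → ¬ f ^ 2 ∣ Δ)
    (hgcd₁ : h ∣ p) (hgcd₂ : h ∣ Δ)
    (hgcd₃ : ∀ d : LaurentPolynomial ℚ, d ∣ p → d ∣ Δ → d ∣ h)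
    (S : Submonoid (LaurentPolynomial ℚ))
    (hS : (S : Set (LaurentPolynomial ℚ)) = {g | IsCoprime g p}) :
    Squarefree h ∧
    Nonempty
      ((LocalizedModule S (⨁ i : Fin n, LaurentPolynomial ℚ ⧸ Ideal.span {q i}))
        ≃ₗ[LaurentPolynomial ℚ]
       (LocalizedModule S (LaurentPolynomial ℚ ⧸ Ideal.span {h}))) := by
  have hpΔ : p ≠ 0 ∨ Δ ≠ 0 := by
    obtain ⟨f, hf⟩ := exists_prime ℚ
    by_contra! h0
    exact hmult f hf (h0.1 ▸ dvd_zero f) (h0.2 ▸ dvd_zero _)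
  refine ⟨squarefree_of_dvd_of_not_sq_dvd hpΔ hmult hgcd₁ hgcd₂, ?_⟩
  rcases n with _ | m
  · have : Subsingleton (LaurentPolynomial ℚ ⧸ Ideal.span {h}) :=
      Ideal.Quotient.subsingleton_iff.mpr <| Ideal.span_singleton_eq_top.mpr <|
        isUnit_of_dvd_one (by simpa [← hprod] using hgcd₂)
    have := IsLocalizedModule.subsingleton_of_subsingleton S
      (LocalizedModule.mkLinearMap S (LaurentPolynomial ℚ ⧸ Ideal.span {h}))
    have := IsLocalizedModule.subsingleton_of_subsingleton S
      (LocalizedModule.mkLinearMap S (⨁ i : Fin 0, LaurentPolynomial ℚ ⧸ Ideal.span {q i}))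
    exact ⟨.ofSubsingleton _ _⟩
  · exact nonempty_localizedModule_directSum_equiv_quotient
      (fun k => hq k.castSucc (Nat.succ_lt_succ k.is_lt)) hprod hpΔ hmult hgcd₁ hgcd₂ hgcd₃
      fun g hg => by rwa [← SetLike.mem_coe, hS]
end

section
/- The 4×4 Seifert matrix V = [[n,1,0,0],[0,1,0,0],[0,0,n,1],[0,0,0,1]] with n = n(x) = -x²-x-1 admits a metabolizer: the vectors v₁ = (1, x, 0, 1)ᵀ and v₂ = (0, 1, 1, -x-1)ᵀ span a rank-2 subspace on which the bilinear form (u,v) ↦ uᵀ V v vanishes identically. -/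
/-!
On `u, v` the form is `n u₀v₀ + u₀v₁ + u₁v₁ + n u₂v₂ + u₂v₃ + u₃v₃`. Evaluated on `v₁, v₂`, both
diagonal values reduce to `n + x² + x + 1`, which vanishes by the choice of `n`, while the
off-diagonal values cancel for every `n`. Independence is read off the first two coordinates,
whose `2 × 2` minor is `1`.
-/

open Matrix

lemma dotProduct_mulVec_seifert_twist_sum {R : Type*} [CommRing R] (n : R) (u v : Fin 4 → R) :
    u ⬝ᵥ (!![n, 1, 0, 0; 0, 1, 0, 0; 0, 0, n, 1; 0, 0, 0, 1] *ᵥ v) =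
      n * u 0 * v 0 + u 0 * v 1 + u 1 * v 1 + (n * u 2 * v 2 + u 2 * v 3 + u 3 * v 3) := by
  simp only [dotProduct, mulVec, Fin.sum_univ_four, of_apply, cons_val', cons_val_zero,
    cons_val_one, cons_val_two, cons_val_three, empty_val', cons_val_fin_one, head_cons,
    tail_cons, head_fin_const]
  ring

lemma linearIndependent_pair_of_minor_ne_zero {K ι : Type*} [Field K] {x y : ι → K} (i j : ι)
    (hminor : x i * y j - x j * y i ≠ 0) : LinearIndependent K ![x, y] := by
  rw [LinearIndependent.pair_iff]
  intro s t hst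
  have hi : s * x i + t * y i = 0 := by simpa using congrFun hst i
  have hj : s * x j + t * y j = 0 := by simpa using congrFun hst j
  have hs : s * (x i * y j - x j * y i) = 0 := by linear_combination y j * hi - y i * hj
  have ht : t * (x i * y j - x j * y i) = 0 := by linear_combination x i * hj - x j * hi
  exact ⟨(mul_eq_zero.mp hs).resolve_right hminor, (mul_eq_zero.mp ht).resolve_right hminor⟩

/-- The `4 × 4` Seifert matrix `V = [[n,1,0,0],[0,1,0,0],[0,0,n,1],[0,0,0,1]]`
with `n = -x² - x - 1` admits a metabolizer: the vectors `v₁ = (1,x,0,1)` and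
`v₂ = (0,1,1,-x-1)` are linearly independent and the form `(u,v) ↦ uᵀ V v`
vanishes identically on their span. -/
theorem stmt_12 (x : ℤ) :
    let n : ℚ := -(x : ℚ) ^ 2 - x - 1
    let V : Matrix (Fin 4) (Fin 4) ℚ :=
      !![n, 1, 0, 0; 0, 1, 0, 0; 0, 0, n, 1; 0, 0, 0, 1]
    let v₁ : Fin 4 → ℚ := ![1, (x : ℚ), 0, 1]
    let v₂ : Fin 4 → ℚ := ![0, 1, 1, -(x : ℚ) - 1]
    LinearIndependent ℚ ![v₁, v₂] ∧
    (v₁ ⬝ᵥ V.mulVec v₁ = 0) ∧ (v₁ ⬝ᵥ V.mulVec v₂ = 0) ∧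
    (v₂ ⬝ᵥ V.mulVec v₁ = 0) ∧ (v₂ ⬝ᵥ V.mulVec v₂ = 0) := by
  intro n V v₁ v₂
  refine ⟨linearIndependent_pair_of_minor_ne_zero 0 1 (by simp [v₁, v₂]), ?_, ?_, ?_, ?_⟩ <;>
  · simp only [V, dotProduct_mulVec_seifert_twist_sum]
    simp only [n, v₁, v₂, cons_val_zero, cons_val_one, cons_val_two, cons_val_three, head_cons,
      tail_cons]
    ring
end

section
/- The vectors m₁ = (1,0), m₂ = (0,1), l₁ = (t(n+xn+x)+1, t(n+1)−1), l₂ = (t(n+1)−1, t(−xn−n−1)+x+1), regarded as elements of the module A = (ℚ[t,t⁻¹]/(nt²+(1−2n)t+n))², with n = −x²−x−1 and x ≥ 2 an integer, are linearly independent over ℤ. -/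
/-!
Evaluating at the two distinct nonzero roots of `q` in an algebraic closure shows that `1` and `t`
are `ℚ`-linearly independent modulo `q`. Hence a `ℤ`-relation among `m₁, m₂, l₁, l₂` splits into
four rational equations: the `t`-coefficients give a symmetric `2 × 2` system in the coefficients
of `l₁, l₂` whose determinant is negative for `x > 0`, so those vanish, and then so do the
constant terms, i.e. the coefficients of `m₁, m₂`.
-/

open LaurentPolynomial

theorem exists_ne_roots_of_discrim_ne_zero {L : Type*} [Field L] [IsAlgClosed L] [NeZero (2 : L)]
    {a b c : L} (ha : a ≠ 0) (hd : discrim a b c ≠ 0) :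
    ∃ u v, u ≠ v ∧ a * (u * u) + b * u + c = 0 ∧ a * (v * v) + b * v + c = 0 := by
  obtain ⟨s, hs⟩ := IsAlgClosed.exists_eq_mul_self (discrim a b c)
  have hs0 : s ≠ 0 := by rintro rfl; simp_all
  refine ⟨(-b + s) / (2 * a), (-b - s) / (2 * a), ?_, (quadratic_eq_zero_iff ha hs _).2 (.inl rfl),
    (quadratic_eq_zero_iff ha hs _).2 (.inr rfl)⟩
  rw [Ne, div_left_inj' (mul_ne_zero two_ne_zero ha)]
  intro h
  have h2s : 2 * s = 0 := by linear_combination h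
  exact hs0 ((mul_eq_zero.1 h2s).resolve_left two_ne_zero)

namespace LaurentPolynomial

variable {R S : Type*} [CommRing R] [CommRing S]

theorem eval₂_quadratic (f : R →+* S) (u : Sˣ) (a b c : R) :
    eval₂ f u (C a * T 2 + C b * T 1 + C c) = f a * (u * u) + f b * u + f c := by
  simp [sq]

theorem C_add_C_mul_T_mem_span_quadratic_iff {K : Type*} [Field K] [NeZero (2 : K)]
    {a b c r s : K} (ha : a ≠ 0) (hc : c ≠ 0) (hd : discrim a b c ≠ 0) :
    C r + C s * T 1 ∈ Ideal.span {C a * T 2 + C b * T 1 + C c} ↔ r = 0 ∧ s = 0 := by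
  refine ⟨fun h => ?_, by rintro ⟨rfl, rfl⟩; simp⟩
  set f := algebraMap K (AlgebraicClosure K)
  have : NeZero (2 : AlgebraicClosure K) :=
    map_ofNat f 2 ▸ NeZero.of_injective (a := (2 : K)) f.injective
  have hdf : discrim (f a) (f b) (f c) ≠ 0 := by
    simpa [discrim, map_ofNat] using (map_ne_zero f).2 hd
  obtain ⟨u, v, huv, hu, hv⟩ := exists_ne_roots_of_discrim_ne_zero ((map_ne_zero f).2 ha) hdf
  have eval_eq_zero : ∀ w, f a * (w * w) + f b * w + f c = 0 → f r + f s * w = 0 := by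
    intro w hw
    have hw0 : w ≠ 0 := by rintro rfl; simp_all
    have := (Ideal.span_singleton_le_iff_mem (RingHom.ker (eval₂ f (Units.mk0 w hw0)))).2
      (by simpa [eval₂_quadratic] using hw) h
    simpa using this
  have hs : f s = 0 := by
    have h : f s * (u - v) = 0 := by linear_combination eval_eq_zero u hu - eval_eq_zero v hv
    exact (mul_eq_zero.1 h).resolve_right (sub_ne_zero.2 huv)
  have hr : f r = 0 := by simpa [hs] using eval_eq_zero u hu
  exact ⟨(map_eq_zero f).1 hr, (map_eq_zero f).1 hs⟩

end LaurentPolynomial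

theorem eq_zero_of_det_ne_zero {K : Type*} [Field K] {A B D c d : K} (hdet : A * D - B ^ 2 ≠ 0)
    (h₁ : c * A + d * B = 0) (h₂ : c * B + d * D = 0) : c = 0 ∧ d = 0 := by
  have hc : c * (A * D - B ^ 2) = 0 := by linear_combination D * h₁ - B * h₂
  have hd : d * (A * D - B ^ 2) = 0 := by linear_combination A * h₂ - B * h₁
  exact ⟨(mul_eq_zero.1 hc).resolve_right hdet, (mul_eq_zero.1 hd).resolve_right hdet⟩

theorem tCoeff_det_neg {x : ℚ} (hx : 0 < x) (n : ℚ) (hn : n = -x ^ 2 - x - 1) :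
    (n + x * n + x) * (-x * n - n - 1) - (n + 1) ^ 2 < 0 := by
  have h : (n + x * n + x) * (-x * n - n - 1) - (n + 1) ^ 2 =
      -((x ^ 3 + 2 * x ^ 2 + x + 1) * (x ^ 3 + 2 * x ^ 2 + 2 * x) + x ^ 2 * (x + 1) ^ 2) := by
    subst hn; ring
  rw [h, neg_lt_zero]
  positivity

/-- The vectors `m₁ = (1,0)`, `m₂ = (0,1)`,
`l₁ = (t(n+xn+x)+1, t(n+1)-1)`, `l₂ = (t(n+1)-1, t(-xn-n-1)+x+1)`, regarded as
elements of `A = (ℚ[t,t⁻¹]/(n t² + (1-2n) t + n))²` with `n = -x² - x - 1` and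
`x ≥ 2` an integer, are linearly independent over `ℤ`. -/
theorem stmt_13 (x : ℤ) (hx : 2 ≤ x) :
    let n : ℚ := -(x : ℚ) ^ 2 - x - 1
    let q : LaurentPolynomial ℚ := C n * T 2 + C (1 - 2 * n) * T 1 + C n
    let Q := LaurentPolynomial ℚ ⧸ Ideal.span {q}
    let π : LaurentPolynomial ℚ →+* Q := Ideal.Quotient.mk (Ideal.span {q})
    let m₁ : Q × Q := (π 1, π 0)
    let m₂ : Q × Q := (π 0, π 1)
    let l₁ : Q × Q :=
      (π (C (n + x * n + x) * T 1 + 1), π (C (n + 1) * T 1 - 1))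
    let l₂ : Q × Q :=
      (π (C (n + 1) * T 1 - 1), π (C (-x * n - n - 1) * T 1 + C ((x : ℚ) + 1)))
    LinearIndependent ℤ ![m₁, m₂, l₁, l₂] := by
  intro n q Q π m₁ m₂ l₁ l₂
  have hx₀ : (0 : ℚ) < x := by exact_mod_cast (by omega : (0 : ℤ) < x)
  have hn : n ≠ 0 := by
    have : 0 < (x : ℚ) ^ 2 + x + 1 := by positivity
    simp only [n]; linarith
  have hdisc : discrim n (1 - 2 * n) n ≠ 0 := by
    have : 0 < (2 * x + 1 : ℚ) ^ 2 + 4 := by positivity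
    simp only [discrim, n]; nlinarith
  have key : ∀ r s : ℚ, π (C r + C s * T 1) = 0 → r = 0 ∧ s = 0 := fun r s h =>
    (C_add_C_mul_T_mem_span_quadratic_iff hn hn hdisc).1 (Ideal.Quotient.eq_zero_iff_mem.1 h)
  rw [Fintype.linearIndependent_iff]
  intro g hg
  have hfst := congrArg Prod.fst hg
  have hsnd := congrArg Prod.snd hg
  simp only [Fin.sum_univ_four, Matrix.cons_val_zero, Matrix.cons_val_one, Matrix.cons_val,
    Prod.fst_add, Prod.snd_add, Prod.smul_fst, Prod.smul_snd, Prod.fst_zero, Prod.snd_zero,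
    m₁, m₂, l₁, l₂] at hfst hsnd
  obtain ⟨h₀, h₂⟩ := key (g 0 + g 2 - g 3) (g 2 * (n + x * n + x) + g 3 * (n + 1)) (by
    simp only [map_add, map_sub, map_mul, map_intCast, map_one, map_zero, zsmul_eq_mul] at hfst ⊢
    linear_combination hfst)
  obtain ⟨h₁, h₃⟩ := key (g 1 - g 2 + g 3 * (x + 1)) (g 2 * (n + 1) + g 3 * (-x * n - n - 1)) (by
    simp only [map_add, map_sub, map_mul, map_neg, map_intCast, map_one, map_zero,
      zsmul_eq_mul] at hsnd ⊢
    linear_combination hsnd)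
  obtain ⟨hg₂, hg₃⟩ := eq_zero_of_det_ne_zero (tCoeff_det_neg hx₀ n rfl).ne h₂ h₃
  simp only [hg₂, hg₃, zero_mul, add_zero, sub_zero] at h₀ h₁
  intro i
  fin_cases i <;> assumption_mod_cast
end
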